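/- Let F be a graph with minimum degree δ ≥ 1 and s = |V(F)| vertices, s ≥ 3. Let G be a graph on n vertices containing a clique Ω of size m ≥ s-1 such that every vertex outside N_G[Ω] together with Ω has common neighborhood inducing a subgraph of G containing the (s-2)-th power of a Hamiltonian path, for every pair x,y of vertices outside N_G[Ω] the common neighborhood N_G({x,y} ∪ Ω) contains a clique of size s-2 inside N_G(Ω), and every vertex of N_G(Ω) (respectively every vertex v outside N_G[Ω]) has at least δ-1 neighbors in Ω (respectively in N_G({v} ∪ Ω)). Then wsat(G, F) ≤ (δ-1)(n-m) + wsat(K_m, F). -/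

import Mathlib

open SimpleGraph Finset Filter

/-- `F` has a copy (an injective graph homomorphism image) in `G`. -/
def HasCopy {W V : Type*} (F : SimpleGraph W) (G : SimpleGraph V) : Prop :=
  ∃ f : W ↪ V, ∀ a b, F.Adj a b → G.Adj (f a) (f b)

/-- Adding the edge `xy` to `H` creates a new copy of `F` containing `xy`. -/
def NewCopyStep {W V : Type*} (F : SimpleGraph W) (H : SimpleGraph V) (x y : V) : Prop :=
  ¬ H.Adj x y ∧
  ∃ f : W ↪ V, ∃ a b : W, F.Adj a b ∧ f a = x ∧ f b = y ∧
    ∀ c d, F.Adj c d → (H ⊔ SimpleGraph.fromEdgeSet {s(x, y)}).Adj (f c) (f d)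

/-- The list `l` of edges can be added successively to `H`, each addition creating a
new copy of `F` containing the added edge. -/
def SatProcess {W V : Type*} (F : SimpleGraph W) : SimpleGraph V → List (V × V) → Prop
  | _, [] => True
  | H, e :: l => NewCopyStep F H e.1 e.2 ∧
      SatProcess F (H ⊔ SimpleGraph.fromEdgeSet {s(e.1, e.2)}) l

/-- The graph obtained from `H` by adding all edges in the list `l`. -/
def addEdges {V : Type*} (H : SimpleGraph V) (l : List (V × V)) : SimpleGraph V :=
  H ⊔ SimpleGraph.fromEdgeSet {e | ∃ p ∈ l, e = s(p.1, p.2)}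

/-- `H` is weakly `(G, F)`-saturated. -/
def WeaklySaturated {W V : Type*} (G : SimpleGraph V) (F : SimpleGraph W)
    (H : SimpleGraph V) : Prop :=
  H ≤ G ∧ ¬ HasCopy F H ∧ ∃ l : List (V × V), SatProcess F H l ∧ addEdges H l = G

/-- The weak saturation number `wsat(G, F)`. -/
noncomputable def wsat {W V : Type*} (G : SimpleGraph V) (F : SimpleGraph W) : ℕ :=
  sInf {m | ∃ H, WeaklySaturated G F H ∧ H.edgeSet.ncard = m}

/-- The common neighborhood `N_G(S)` of a set `S` of vertices. -/
def commonNbhd {V : Type*} (G : SimpleGraph V) (S : Set V) : Set V :=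
  {v | ∀ u ∈ S, G.Adj u v}

/-- The closed common neighborhood `N_G[S] = S ∪ N_G(S)`. -/
def closedCommonNbhd {V : Type*} (G : SimpleGraph V) (S : Set V) : Set V :=
  S ∪ commonNbhd G S

lemma addEdges_nil {V : Type*} (H : SimpleGraph V) : addEdges H [] = H := by
  have : {e : Sym2 V | ∃ p ∈ ([] : List (V × V)), e = s(p.1, p.2)} = ∅ := by
    simp
  rw [addEdges, this]
  simp

lemma addEdges_cons {V : Type*} (H : SimpleGraph V) (e : V × V) (l : List (V × V)) :
    addEdges H (e :: l) = addEdges (H ⊔ SimpleGraph.fromEdgeSet {s(e.1, e.2)}) l := by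
  rw [addEdges, addEdges, sup_assoc, ← SimpleGraph.fromEdgeSet_union]
  congr 1
  · congr 1
    ext x
    simp only [Set.mem_setOf_eq, List.mem_cons, Set.mem_union, Set.mem_singleton_iff]
    constructor
    · rintro ⟨p, hp | hp, rfl⟩
      · left; rw [hp]
      · right; exact ⟨p, hp, rfl⟩
    · rintro (h | ⟨p, hp, rfl⟩)
      · exact ⟨e, Or.inl rfl, h⟩
      · exact ⟨p, Or.inr hp, rfl⟩

lemma addEdges_append {V : Type*} (H : SimpleGraph V) (l₁ l₂ : List (V × V)) :
    addEdges H (l₁ ++ l₂) = addEdges (addEdges H l₁) l₂ := by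
  induction l₁ generalizing H with
  | nil => rw [addEdges_nil]; rfl
  | cons e l ih => rw [List.cons_append, addEdges_cons, ih, addEdges_cons]

lemma satProcess_append {W V : Type*} (F : SimpleGraph W) (H : SimpleGraph V)
    (l₁ l₂ : List (V × V)) :
    SatProcess F H (l₁ ++ l₂) ↔ SatProcess F H l₁ ∧ SatProcess F (addEdges H l₁) l₂ := by
  induction l₁ generalizing H with
  | nil => simp [SatProcess, addEdges_nil]
  | cons e l ih =>
      simp only [List.cons_append, SatProcess, addEdges_cons, and_assoc]
      rw [ih]
lemma single_le {V : Type*} {G : SimpleGraph V} {x y : V} (h : G.Adj x y) :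
    SimpleGraph.fromEdgeSet {s(x,y)} ≤ G := by
  intro u v huv
  rw [SimpleGraph.fromEdgeSet_adj, Set.mem_singleton_iff, Sym2.eq_iff] at huv
  rcases huv.1 with ⟨rfl, rfl⟩ | ⟨rfl, rfl⟩
  · exact h
  · exact h.symm

lemma greedy {n s : ℕ} (F : SimpleGraph (Fin s)) (G : SimpleGraph (Fin n)) :
    ∀ (k : ℕ) (H₁ : SimpleGraph (Fin n)), (G.edgeSet \ H₁.edgeSet).ncard ≤ k → H₁ ≤ G →
    (∀ H', H₁ ≤ H' → H' ≤ G → H' ≠ G → ∃ x y, G.Adj x y ∧ NewCopyStep F H' x y) →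
    ∃ l, SatProcess F H₁ l ∧ addEdges H₁ l = G := by
  intro k
  induction k with
  | zero =>
    intro H₁ hc hle _
    have h0 : (G.edgeSet \ H₁.edgeSet) = ∅ :=
      (Set.ncard_eq_zero (Set.toFinite _)).mp (Nat.le_zero.mp hc)
    have hsub : G.edgeSet ⊆ H₁.edgeSet := by rwa [Set.diff_eq_empty] at h0
    exact ⟨[], trivial, by
      rw [addEdges_nil]; exact le_antisymm hle (SimpleGraph.edgeSet_subset_edgeSet.mp hsub)⟩
  | succ k ih =>
    intro H₁ hc hle hstep
    by_cases hEq : H₁ = G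
    · exact ⟨[], trivial, by rw [addEdges_nil, hEq]⟩
    obtain ⟨x, y, hGxy, hnew⟩ := hstep H₁ le_rfl hle hEq
    set H₂ := H₁ ⊔ SimpleGraph.fromEdgeSet {s(x,y)} with hH₂
    have hle₂ : H₂ ≤ G := sup_le hle (single_le hGxy)
    have hcard : (G.edgeSet \ H₂.edgeSet).ncard ≤ k := by
      have hss : G.edgeSet \ H₂.edgeSet ⊂ G.edgeSet \ H₁.edgeSet := by
        constructor
        · apply Set.diff_subset_diff_right
          exact SimpleGraph.edgeSet_mono le_sup_left
        · intro hsub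
          have h1 : s(x,y) ∈ G.edgeSet \ H₁.edgeSet :=
            ⟨hGxy, fun hmem => hnew.1 ((SimpleGraph.mem_edgeSet _).mp hmem)⟩
          have h2 := hsub h1
          exact h2.2 (SimpleGraph.edgeSet_mono le_sup_right
            (by rw [SimpleGraph.edgeSet_fromEdgeSet]; exact ⟨rfl, by simp [hGxy.ne]⟩))
      have := Set.ncard_lt_ncard hss (Set.toFinite _)
      omega
    obtain ⟨l₂, hsp, hadd⟩ := ih H₂ hcard hle₂
      (fun H' h1 h2 h3 => hstep H' (le_trans le_sup_left h1) h2 h3)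
    exact ⟨(x,y) :: l₂, ⟨hnew, hsp⟩, by rw [addEdges_cons]; exact hadd⟩
lemma exists_ws {m s : ℕ} (F : SimpleGraph (Fin s)) (a b : Fin s) (hab : F.Adj a b) :
    ∀ (k : ℕ) (H : SimpleGraph (Fin m)), H.edgeSet.ncard ≤ k →
    ∃ H', H' ≤ H ∧ ¬ HasCopy F H' ∧ ∃ l, SatProcess F H' l ∧ addEdges H' l = H := by
  intro k
  induction k with
  | zero =>
    intro H hc
    refine ⟨H, le_rfl, ?_, [], trivial, addEdges_nil H⟩
    rintro ⟨f, hf⟩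
    have hadj : H.Adj (f a) (f b) := hf a b hab
    have h0 : H.edgeSet = ∅ := (Set.ncard_eq_zero (Set.toFinite _)).mp (Nat.le_zero.mp hc)
    exact absurd ((SimpleGraph.mem_edgeSet _).mpr hadj) (by rw [h0]; exact Set.notMem_empty _)
  | succ k ih =>
    intro H hc
    by_cases h : HasCopy F H
    · obtain ⟨f, hf⟩ := h
      have hadj : H.Adj (f a) (f b) := hf a b hab
      set Hm := H.deleteEdges {s(f a, f b)} with hHm
      have key : Hm ⊔ SimpleGraph.fromEdgeSet {s(f a, f b)} = H := by
        ext u v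
        simp only [SimpleGraph.sup_adj, SimpleGraph.deleteEdges_adj, hHm,
          SimpleGraph.fromEdgeSet_adj, Set.mem_singleton_iff]
        constructor
        · rintro (⟨h1, _⟩ | ⟨h1, _⟩)
          · exact h1
          · rw [Sym2.eq_iff] at h1
            rcases h1 with ⟨rfl, rfl⟩ | ⟨rfl, rfl⟩
            · exact hadj
            · exact hadj.symm
        · intro hH
          by_cases he : s(u,v) = s(f a, f b)
          · exact Or.inr ⟨he, hH.ne⟩
          · exact Or.inl ⟨hH, he⟩
      have hcnt : Hm.edgeSet.ncard ≤ k := by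
        have hmem : s(f a, f b) ∈ H.edgeSet := (SimpleGraph.mem_edgeSet _).mpr hadj
        have hes : Hm.edgeSet = H.edgeSet \ {s(f a, f b)} := by
          rw [hHm, SimpleGraph.edgeSet_deleteEdges]
        have := Set.ncard_diff_singleton_lt_of_mem hmem (Set.toFinite _)
        rw [hes]
        omega
      obtain ⟨H', hle, hnc, l, hsp, hadd⟩ := ih Hm hcnt
      have hstep : NewCopyStep F Hm (f a) (f b) := by
        refine ⟨?_, f, a, b, hab, rfl, rfl, fun c d hcd => by rw [key]; exact hf c d hcd⟩
        rw [hHm, SimpleGraph.deleteEdges_adj]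
        rintro ⟨-, hmem⟩
        exact hmem rfl
      refine ⟨H', le_trans hle (SimpleGraph.deleteEdges_le _), hnc, l ++ [(f a, f b)], ?_, ?_⟩
      · rw [satProcess_append, hadd]
        exact ⟨hsp, hstep, trivial⟩
      · rw [addEdges_append, hadd, addEdges_cons, addEdges_nil]
        exact key
    · exact ⟨H, le_rfl, h, [], trivial, addEdges_nil H⟩
lemma step_lemma {n s : ℕ} (F : SimpleGraph (Fin s)) [DecidableRel F.Adj]
    (H : SimpleGraph (Fin n)) (hs : 3 ≤ s) (hδ1 : 1 ≤ F.minDegree)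
    {x y : Fin n} (S R : Finset (Fin n)) (hxy : ¬ H.Adj x y) (hxyne : x ≠ y)
    (hS : S.card = F.minDegree - 1) (hR : R.card = s - 1 - F.minDegree)
    (hdisj : Disjoint S R) (hxS : x ∉ S) (hxR : x ∉ R) (hyS : y ∉ S) (hyR : y ∉ R)
    (hclique : H.IsClique ↑(insert y (S ∪ R)))
    (hadjxS : ∀ t ∈ S, H.Adj x t) :
    NewCopyStep F H x y := by
  classical
  haveI : Nonempty (Fin s) := ⟨⟨0, by omega⟩⟩
  obtain ⟨a, ha⟩ := F.exists_minimal_degree_vertex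
  have hd1 : 1 ≤ F.degree a := ha ▸ hδ1
  have hne : (F.neighborFinset a).Nonempty := by
    rw [← Finset.card_pos, F.card_neighborFinset_eq_degree]; omega
  obtain ⟨b, hb⟩ := hne
  have hab : F.Adj a b := (F.mem_neighborFinset a b).mp hb
  have hban : b ≠ a := fun h => F.irrefl (h ▸ hab)
  set N' : Finset (Fin s) := (F.neighborFinset a).erase b with hN'
  have hanN : a ∉ F.neighborFinset a := by simp
  have hcN' : N'.card = F.minDegree - 1 := by
    rw [hN', Finset.card_erase_of_mem hb, F.card_neighborFinset_eq_degree, ← ha]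
  set Rest : Finset (Fin s) := Finset.univ \ insert a (F.neighborFinset a) with hRest
  have hcRest : Rest.card = s - 1 - F.minDegree := by
    rw [hRest, Finset.card_sdiff_of_subset (Finset.subset_univ _), Finset.card_insert_of_notMem hanN,
      F.card_neighborFinset_eq_degree, ← ha, Finset.card_univ, Fintype.card_fin]
    have : F.minDegree ≤ s - 1 := by
      have h2 := F.minDegree_le_degree a
      have h3 : F.degree a ≤ s - 1 := by
        have : F.neighborFinset a ⊆ Finset.univ.erase a := fun c hc =>
          Finset.mem_erase.mpr ⟨F.ne_of_adj ((F.mem_neighborFinset a c).mp hc) |>.symm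
            |> fun h => h, Finset.mem_univ c⟩
        calc F.degree a = (F.neighborFinset a).card := (F.card_neighborFinset_eq_degree a).symm
          _ ≤ (Finset.univ.erase a).card := Finset.card_le_card this
          _ = s - 1 := by rw [Finset.card_erase_of_mem (Finset.mem_univ a),
              Finset.card_univ, Fintype.card_fin]
      omega
    omega
  have e1 : {c // c ∈ N'} ≃ {t // t ∈ S} := Finset.equivOfCardEq (by rw [hcN', hS])
  have e2 : {c // c ∈ Rest} ≃ {t // t ∈ R} := Finset.equivOfCardEq (by rw [hcRest, hR])
  have hRmem : ∀ c : Fin s, c ≠ a → c ≠ b → c ∉ N' → c ∈ Rest := by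
    intro c h1 h2 h3
    rw [hRest, Finset.mem_sdiff]
    refine ⟨Finset.mem_univ c, fun hmem => ?_⟩
    rcases Finset.mem_insert.mp hmem with h | h
    · exact h1 h
    · exact h3 (Finset.mem_erase.mpr ⟨h2, h⟩)
  set f : Fin s → Fin n := fun c =>
    if hca : c = a then x else if hcb : c = b then y else
      if hcN : c ∈ N' then (e1 ⟨c, hcN⟩ : Fin n) else
        (e2 ⟨c, hRmem c hca hcb hcN⟩ : Fin n) with hf
  have hfa : f a = x := by rw [hf]; simp
  have hfb : f b = y := by rw [hf]; simp [hban]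
  have hfN : ∀ c (h : c ∈ N'), f c ∈ S := by
    intro c h
    have hca : c ≠ a := fun hc => hanN (Finset.mem_of_mem_erase (hc ▸ h))
    have hcb : c ≠ b := (Finset.mem_erase.mp h).1
    rw [hf]; simp only [dif_neg hca, dif_neg hcb, dif_pos h]
    exact (e1 ⟨c, h⟩).2
  have hfR : ∀ c (hca : c ≠ a) (hcb : c ≠ b) (h : c ∉ N'), f c ∈ R := by
    intro c hca hcb h
    rw [hf]; simp only [dif_neg hca, dif_neg hcb, dif_neg h]
    exact (e2 ⟨c, hRmem c hca hcb h⟩).2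
  have hfNval : ∀ c (h : c ∈ N'), f c = ↑(e1 ⟨c, h⟩) := by
    intro c h
    have hca : c ≠ a := fun hc => hanN (Finset.mem_of_mem_erase (hc ▸ h))
    have hcb : c ≠ b := (Finset.mem_erase.mp h).1
    rw [hf]; simp only [dif_neg hca, dif_neg hcb, dif_pos h]
  have hfRval : ∀ c (hca : c ≠ a) (hcb : c ≠ b) (h : c ∉ N'),
      f c = ↑(e2 ⟨c, hRmem c hca hcb h⟩) := by
    intro c hca hcb h
    rw [hf]; simp only [dif_neg hca, dif_neg hcb, dif_neg h]
  have hinj : Function.Injective f := by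
    intro c d hcd
    rcases em (c = a) with hca | hca
    · rw [hca, hfa] at hcd
      rcases em (d = a) with hda | hda
      · rw [hca, hda]
      rcases em (d = b) with hdb | hdb
      · rw [hdb, hfb] at hcd; exact absurd hcd hxyne
      rcases em (d ∈ N') with hdN | hdN
      · exact absurd (hcd ▸ hfN d hdN) hxS
      · exact absurd (hcd ▸ hfR d hda hdb hdN) hxR
    rcases em (c = b) with hcb | hcb
    · rw [hcb, hfb] at hcd
      rcases em (d = a) with hda | hda
      · rw [hda, hfa] at hcd; exact absurd hcd.symm hxyne
      rcases em (d = b) with hdb | hdb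
      · rw [hcb, hdb]
      rcases em (d ∈ N') with hdN | hdN
      · exact absurd (hcd ▸ hfN d hdN) hyS
      · exact absurd (hcd ▸ hfR d hda hdb hdN) hyR
    rcases em (c ∈ N') with hcN | hcN
    · rcases em (d = a) with hda | hda
      · rw [hda, hfa] at hcd; exact absurd (hcd ▸ hfN c hcN) hxS
      rcases em (d = b) with hdb | hdb
      · rw [hdb, hfb] at hcd; exact absurd (hcd ▸ hfN c hcN) hyS
      rcases em (d ∈ N') with hdN | hdN
      · exact congrArg Subtype.val (e1.injective (Subtype.ext
          ((hfNval c hcN).symm.trans (hcd.trans (hfNval d hdN)))))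
      · have h1 := hfN c hcN
        have h2 := hfR d hda hdb hdN
        rw [hcd] at h1
        exact absurd h2 (Finset.disjoint_left.mp hdisj h1)
    · rcases em (d = a) with hda | hda
      · rw [hda, hfa] at hcd; exact absurd (hcd ▸ hfR c hca hcb hcN) hxR
      rcases em (d = b) with hdb | hdb
      · rw [hdb, hfb] at hcd; exact absurd (hcd ▸ hfR c hca hcb hcN) hyR
      rcases em (d ∈ N') with hdN | hdN
      · have h1 := hfR c hca hcb hcN
        have h2 := hfN d hdN
        rw [hcd] at h1
        exact absurd h2 (Finset.disjoint_right.mp hdisj h1)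
      · exact congrArg Subtype.val (e2.injective (Subtype.ext
          ((hfRval c hca hcb hcN).symm.trans (hcd.trans (hfRval d hda hdb hdN)))))
  -- membership of images (other than a) in the clique
  have hQ : ∀ c, c ≠ a → f c ∈ insert y (S ∪ R) := by
    intro c hca
    rcases em (c = b) with hcb | hcb
    · rw [hcb, hfb]; exact Finset.mem_insert_self _ _
    rcases em (c ∈ N') with hcN | hcN
    · exact Finset.mem_insert_of_mem (Finset.mem_union_left _ (hfN c hcN))
    · exact Finset.mem_insert_of_mem (Finset.mem_union_right _ (hfR c hca hcb hcN))
  refine ⟨hxy, ⟨f, hinj⟩, a, b, hab, hfa, hfb, ?_⟩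
  intro c d hcd
  simp only [Function.Embedding.coeFn_mk]
  rcases em (c = a) with hca | hca
  · rcases em (d = a) with hda | hda
    · rw [hca, hda] at hcd; exact absurd hcd (F.irrefl)
    rcases em (d = b) with hdb | hdb
    · rw [hca, hdb, hfa, hfb]
      exact Or.inr ((SimpleGraph.fromEdgeSet_adj _).mpr ⟨rfl, hxyne⟩)
    rcases em (d ∈ N') with hdN | hdN
    · rw [hca, hfa]; exact Or.inl (hadjxS _ (hfN d hdN))
    · rw [hca] at hcd
      exact absurd ((F.mem_neighborFinset a d).mpr hcd)
        (fun h => hdN (Finset.mem_erase.mpr ⟨hdb, h⟩))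
  rcases em (d = a) with hda | hda
  · rcases em (c = b) with hcb | hcb
    · rw [hcb, hda, hfa, hfb]
      refine Or.inr ((SimpleGraph.fromEdgeSet_adj _).mpr ⟨?_, fun h => hxyne h.symm⟩)
      rw [Sym2.eq_swap]; rfl
    rcases em (c ∈ N') with hcN | hcN
    · rw [hda, hfa]; exact Or.inl (hadjxS _ (hfN c hcN)).symm
    · rw [hda] at hcd
      exact absurd ((F.mem_neighborFinset a c).mpr hcd.symm)
        (fun h => hcN (Finset.mem_erase.mpr ⟨hcb, h⟩))
  · have h1 := hQ c hca
    have h2 := hQ d hda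
    have hne2 : f c ≠ f d := fun h => (F.ne_of_adj hcd) (hinj h)
    exact Or.inl (hclique h1 h2 hne2)
lemma edgeSet_map' {V W : Type*} (f : V ↪ W) (G : SimpleGraph V) :
    (G.map f).edgeSet = Sym2.map f '' G.edgeSet := by
  ext e
  refine Sym2.inductionOn e fun u v => ?_
  constructor
  · rintro ⟨-, a, b, hab, rfl, rfl⟩
    exact ⟨s(a,b), hab, rfl⟩
  · rintro ⟨e', he', hmap⟩
    revert he' hmap
    refine Sym2.inductionOn e' fun a b => fun he' hmap => ?_
    rw [Sym2.map_pair_eq, Sym2.eq_iff] at hmap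
    rcases hmap with ⟨h1, h2⟩ | ⟨h1, h2⟩
    · exact ⟨fun h => ((SimpleGraph.mem_edgeSet _).mp he').ne (f.injective (h1.trans (h.trans h2.symm))), a, b, he', h1, h2⟩
    · exact ⟨fun h => ((SimpleGraph.mem_edgeSet _).mp he').ne (f.injective (h1.trans (h.symm.trans h2.symm))), b, a, (SimpleGraph.mem_edgeSet _).mp he' |>.symm, h2, h1⟩

lemma minDeg_facts {s : ℕ} (F : SimpleGraph (Fin s)) [DecidableRel F.Adj]
    (hs : 1 ≤ s) (hδ : 1 ≤ F.minDegree) :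
    (∃ a b, F.Adj a b) ∧ F.minDegree ≤ s - 1 := by
  haveI : Nonempty (Fin s) := ⟨⟨0, by omega⟩⟩
  obtain ⟨a, ha⟩ := F.exists_minimal_degree_vertex
  have hd1 : 1 ≤ F.degree a := ha ▸ hδ
  have hne : (F.neighborFinset a).Nonempty := by
    rw [← Finset.card_pos, F.card_neighborFinset_eq_degree]; omega
  obtain ⟨b, hb⟩ := hne
  refine ⟨⟨a, b, (F.mem_neighborFinset a b).mp hb⟩, ?_⟩
  have hsub : F.neighborFinset a ⊆ Finset.univ.erase a := fun c hc =>
    Finset.mem_erase.mpr ⟨fun h => F.irrefl (h ▸ (F.mem_neighborFinset a c).mp hc),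
      Finset.mem_univ c⟩
  have h3 : F.degree a ≤ s - 1 := by
    calc F.degree a = (F.neighborFinset a).card := (F.card_neighborFinset_eq_degree a).symm
      _ ≤ (Finset.univ.erase a).card := Finset.card_le_card hsub
      _ = s - 1 := by rw [Finset.card_erase_of_mem (Finset.mem_univ a),
          Finset.card_univ, Fintype.card_fin]
  omega
lemma map_sup' {V W : Type*} (f : V ↪ W) (G₁ G₂ : SimpleGraph V) :
    (G₁ ⊔ G₂).map f = G₁.map f ⊔ G₂.map f := by
  ext u v
  simp only [SimpleGraph.map_adj, SimpleGraph.sup_adj]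
  constructor
  · rintro ⟨a, b, (h | h), rfl, rfl⟩
    · exact Or.inl ⟨a, b, h, rfl, rfl⟩
    · exact Or.inr ⟨a, b, h, rfl, rfl⟩
  · rintro (⟨a, b, h, rfl, rfl⟩ | ⟨a, b, h, rfl, rfl⟩)
    · exact ⟨a, b, Or.inl h, rfl, rfl⟩
    · exact ⟨a, b, Or.inr h, rfl, rfl⟩

lemma map_single {V W : Type*} (f : V ↪ W) (x y : V) :
    (SimpleGraph.fromEdgeSet {s(x, y)}).map f = SimpleGraph.fromEdgeSet {s(f x, f y)} := by
  ext u v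
  simp only [SimpleGraph.map_adj, SimpleGraph.fromEdgeSet_adj, Set.mem_singleton_iff]
  constructor
  · rintro ⟨a, b, ⟨hab, hne⟩, rfl, rfl⟩
    rw [Sym2.eq_iff] at hab
    rcases hab with ⟨rfl, rfl⟩ | ⟨rfl, rfl⟩
    · exact ⟨rfl, fun h => hne (f.injective h)⟩
    · exact ⟨Sym2.eq_swap, fun h => hne (f.injective h)⟩
  · rintro ⟨hab, hne⟩
    rw [Sym2.eq_iff] at hab
    rcases hab with ⟨h1, h2⟩ | ⟨h1, h2⟩
    · exact ⟨x, y, ⟨rfl, fun h => hne (by rw [h1, h2, h])⟩, h1.symm, h2.symm⟩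
    · exact ⟨y, x, ⟨Sym2.eq_swap, fun h => hne (by rw [h1, h2, h])⟩, h1.symm, h2.symm⟩

lemma transfer {m n s : ℕ} (F : SimpleGraph (Fin s)) (ι : Fin m ↪ Fin n)
    (X : SimpleGraph (Fin n)) (hX : ∀ x y : Fin m, ¬ X.Adj (ι x) (ι y)) :
    ∀ (l : List (Fin m × Fin m)) (H₀ : SimpleGraph (Fin m)), SatProcess F H₀ l →
      SatProcess F (H₀.map ι ⊔ X) (l.map fun e => (ι e.1, ι e.2)) ∧
      addEdges (H₀.map ι ⊔ X) (l.map fun e => (ι e.1, ι e.2)) = (addEdges H₀ l).map ι ⊔ X := by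
  intro l
  induction l with
  | nil =>
    intro H₀ _
    exact ⟨trivial, by rw [List.map_nil, addEdges_nil, addEdges_nil]⟩
  | cons e l ih =>
    rintro H₀ ⟨⟨hnadj, f, a, b, hab, hfa, hfb, hcopy⟩, hsp⟩
    have hswap : (H₀.map ι ⊔ X) ⊔ SimpleGraph.fromEdgeSet {s(ι e.1, ι e.2)}
        = (H₀ ⊔ SimpleGraph.fromEdgeSet {s(e.1, e.2)}).map ι ⊔ X := by
      rw [map_sup', map_single, sup_assoc, sup_comm X _, ← sup_assoc]
    constructor
    · refine ⟨⟨?_, ⟨f.trans ι, ?_⟩, a, b, hab, ?_, ?_, ?_⟩, ?_⟩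
      · rintro (hmap | hXadj)
        · rw [SimpleGraph.map_adj] at hmap
          obtain ⟨u, v, huv, hu, hv⟩ := hmap
          rw [ι.injective hu, ι.injective hv] at huv
          exact hnadj huv
        · exact hX _ _ hXadj
      · exact ι.injective.comp f.injective
      · exact congrArg ι hfa
      · exact congrArg ι hfb
      · intro c d hcd
        simp only [Function.Embedding.trans_apply]
        rw [hswap]
        exact Or.inl (SimpleGraph.map_adj_apply.mpr (hcopy c d hcd))
      · rw [hswap]
        exact (ih _ hsp).1
    · rw [List.map_cons, addEdges_cons, addEdges_cons, hswap, (ih _ hsp).2]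
/-- given a clique `Ω` of size `m ≥ s-1` in `G` such that every vertex
outside `N_G[Ω]` has common neighborhood with `Ω` inducing the `(s-2)`-th power of a
Hamiltonian path, every pair outside `N_G[Ω]` has an `(s-2)`-clique inside
`N_G(Ω) ∩ N_G({x,y} ∪ Ω)`, every vertex of `N_G(Ω)` has at least `δ-1` neighbors in
`Ω`, and every vertex `v` outside `N_G[Ω]` has at least `δ-1` neighbors in
`N_G({v} ∪ Ω)`, we get `wsat(G, F) ≤ (δ-1)(n-m) + wsat(K_m, F)`. -/
theorem stmt11 {n s m : ℕ} (G : SimpleGraph (Fin n)) (F : SimpleGraph (Fin s))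
    [DecidableRel G.Adj] [DecidableRel F.Adj]
    (hs : 3 ≤ s) (hδ : 1 ≤ F.minDegree) (hm : s - 1 ≤ m)
    (Ω : Finset (Fin n)) (hΩcard : Ω.card = m) (hΩclique : G.IsClique ↑Ω)
    (hham : ∀ v : Fin n, v ∉ closedCommonNbhd G ↑Ω →
      ∃ l : List (Fin n), l.Nodup ∧ {x | x ∈ l} = commonNbhd G ({v} ∪ ↑Ω) ∧
        ∀ i j : Fin l.length, (i : ℕ) < (j : ℕ) → (j : ℕ) - (i : ℕ) ≤ s - 2 →
          G.Adj (l.get i) (l.get j))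
    (hpair : ∀ x y : Fin n, x ≠ y → x ∉ closedCommonNbhd G ↑Ω →
      y ∉ closedCommonNbhd G ↑Ω →
      ∃ T : Finset (Fin n), T.card = s - 2 ∧ G.IsClique ↑T ∧
        ↑T ⊆ commonNbhd G ({x, y} ∪ ↑Ω) ∧ ↑T ⊆ commonNbhd G ↑Ω)
    (hdeg1 : ∀ v ∈ commonNbhd G ↑Ω, F.minDegree - 1 ≤ (Ω.filter fun u => G.Adj v u).card)
    (hdeg2 : ∀ v : Fin n, v ∉ closedCommonNbhd G ↑Ω →
      F.minDegree - 1 ≤ (commonNbhd G ({v} ∪ ↑Ω)).ncard) :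
    wsat G F ≤ (F.minDegree - 1) * (n - m) + wsat (⊤ : SimpleGraph (Fin m)) F := by
  classical
  obtain ⟨⟨a₀, b₀, hab₀⟩, hδs⟩ := minDeg_facts F (by omega) hδ
  set δ := F.minDegree with hδdef
  have hmn : m ≤ n := by
    have := Finset.card_le_univ Ω
    simpa [hΩcard] using this
  have hΩne : Ω.Nonempty := Finset.card_pos.mp (by omega)
  set A := commonNbhd G (↑Ω : Set (Fin n)) with hA
  set B := {v : Fin n | v ∉ closedCommonNbhd G ↑Ω} with hB
  have hAdj : ∀ v ∈ A, ∀ u ∈ Ω, G.Adj v u := fun v hv u hu => (hv u hu).symm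
  have hAΩ : ∀ v ∈ A, v ∉ Ω := fun v hv hmem => G.irrefl (hAdj v hv v hmem)
  have hBclosed : ∀ v, v ∈ B ↔ v ∉ closedCommonNbhd G ↑Ω := fun v => Iff.rfl
  have hABdisj : ∀ v ∈ A, v ∉ B := fun v hv hB' => hB' (Or.inr hv)
  have hBΩ : ∀ v ∈ B, v ∉ Ω := fun v hv hmem => hv (Or.inl hmem)
  have hBA : ∀ v ∈ B, v ∉ A := fun v hv hmem => hv (Or.inr hmem)
  have htri : ∀ v : Fin n, v ∈ Ω ∨ v ∈ A ∨ v ∈ B := by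
    intro v
    by_cases h1 : v ∈ closedCommonNbhd G ↑Ω
    · rcases h1 with h1 | h1
      · exact Or.inl h1
      · exact Or.inr (Or.inl h1)
    · exact Or.inr (Or.inr h1)
  have hWsub : ∀ v w, w ∈ commonNbhd G ({v} ∪ ↑Ω) → w ∈ A ∧ G.Adj v w := by
    intro v w hw
    exact ⟨fun u hu => hw u (Or.inr hu), hw v (Or.inl rfl)⟩
  -- the Hamiltonian path lists
  have hham' : ∀ v : Fin n, ∃ l : List (Fin n), v ∈ B →
      l.Nodup ∧ {x | x ∈ l} = commonNbhd G ({v} ∪ ↑Ω) ∧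
        ∀ i j : Fin l.length, (i : ℕ) < (j : ℕ) → (j : ℕ) - (i : ℕ) ≤ s - 2 →
          G.Adj (l.get i) (l.get j) := by
    intro v
    by_cases h : v ∈ B
    · obtain ⟨l, h1, h2, h3⟩ := hham v h
      exact ⟨l, fun _ => ⟨h1, h2, h3⟩⟩
    · exact ⟨[], fun h' => absurd h' h⟩
  choose L hL using hham'
  have hLlen : ∀ v ∈ B, δ - 1 ≤ (L v).length := by
    intro v hv
    obtain ⟨hnd, hset, _⟩ := hL v hv
    have h1 : {x | x ∈ L v} = ↑(L v).toFinset := by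
      ext x; simp
    have h2 : {x | x ∈ L v}.ncard = (L v).length := by
      rw [h1, Set.ncard_coe_finset, List.toFinset_card_of_nodup hnd]
    have := hdeg2 v hv
    rw [← hset] at this
    omega
  -- the pendant edge choices
  have hCex : ∀ v : Fin n, ∃ Cv : Finset (Fin n), v ∉ Ω →
      (Cv.card = δ - 1 ∧ (∀ w ∈ Cv, G.Adj v w) ∧
       (v ∈ A → Cv ⊆ Ω) ∧
       (v ∈ B → ((↑Cv : Set (Fin n)) ⊆ commonNbhd G ({v} ∪ ↑Ω) ∧
          (∀ (j : ℕ) (hjl : j < (L v).length), j < δ - 1 → (L v).get ⟨j, hjl⟩ ∈ Cv) ∧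
          (∀ w₁ ∈ Cv, ∀ w₂ ∈ Cv, w₁ ≠ w₂ → G.Adj w₁ w₂)))) := by
    intro v
    by_cases hvA : v ∈ A
    · have hfil := hdeg1 v hvA
      obtain ⟨Cv, hsub, hcard⟩ := Finset.exists_subset_card_eq hfil
      refine ⟨Cv, fun _ => ⟨hcard, ?_, fun _ => fun w hw => (Finset.mem_filter.mp (hsub hw)).1,
        fun hvB => (hABdisj v hvA hvB).elim⟩⟩
      · exact fun w hw => (Finset.mem_filter.mp (hsub hw)).2
    · by_cases hvB : v ∈ B
      · obtain ⟨hnd, hset, hadjL⟩ := hL v hvB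
        have hlen := hLlen v hvB
        set Cv := ((L v).take (δ - 1)).toFinset with hCv
        have hndt : ((L v).take (δ - 1)).Nodup := hnd.sublist (List.take_sublist _ _)
        have hcard : Cv.card = δ - 1 := by
          rw [hCv, List.toFinset_card_of_nodup hndt, List.length_take]
          omega
        have hmemW : ∀ w ∈ Cv, w ∈ commonNbhd G ({v} ∪ ↑Ω) := by
          intro w hw
          rw [hCv, List.mem_toFinset] at hw
          have : w ∈ L v := (List.take_sublist _ _).subset hw
          rw [← hset]; exact this
        have hidx : ∀ w ∈ Cv, ∃ (j : ℕ) (hjl : j < (L v).length),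
            j < δ - 1 ∧ (L v).get ⟨j, hjl⟩ = w := by
          intro w hw
          rw [hCv, List.mem_toFinset] at hw
          obtain ⟨⟨j, hj⟩, hget⟩ := List.mem_iff_get.mp hw
          rw [List.length_take] at hj
          have hjl : j < (L v).length := lt_of_lt_of_le hj (min_le_right _ _)
          refine ⟨j, hjl, lt_of_lt_of_le hj (min_le_left _ _), ?_⟩
          rw [← hget]; simp [List.getElem_take']
        refine ⟨Cv, fun _ => ⟨hcard, ?_, fun hvA' => absurd hvA' hvA, fun _ => ⟨hmemW, ?_, ?_⟩⟩⟩
        · exact fun w hw => (hWsub v w (hmemW w hw)).2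
        · intro j hjl hj
          rw [hCv, List.mem_toFinset]
          have h2 : j < ((L v).take (δ - 1)).length := by
            simp only [List.length_take]; omega
          have heq : ((L v).take (δ - 1)).get ⟨j, h2⟩ = (L v).get ⟨j, hjl⟩ := by
            simp [List.getElem_take']
          rw [← heq]; exact List.get_mem _ _
        · intro w₁ hw₁ w₂ hw₂ hne
          obtain ⟨j₁, hjl₁, hj₁, hget₁⟩ := hidx w₁ hw₁
          obtain ⟨j₂, hjl₂, hj₂, hget₂⟩ := hidx w₂ hw₂
          have hjne : j₁ ≠ j₂ := by
            intro h; subst h; apply hne; rw [← hget₁, ← hget₂]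
          rcases lt_or_gt_of_ne hjne with hlt | hgt
          · rw [← hget₁, ← hget₂]
            exact hadjL ⟨j₁, hjl₁⟩ ⟨j₂, hjl₂⟩ hlt (by simp; omega)
          · rw [← hget₁, ← hget₂]
            exact (hadjL ⟨j₂, hjl₂⟩ ⟨j₁, hjl₁⟩ hgt (by simp; omega)).symm
      · exact ⟨∅, fun hvΩ => absurd (htri v) (by simp [hvΩ, hvA, hvB])⟩
  choose C hC using hCex
  have hCne_self : ∀ v, v ∉ Ω → v ∉ C v :=
    fun v hv hmem => G.irrefl ((hC v hv).2.1 v hmem)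
  have hCA : ∀ v, v ∈ A → C v ⊆ Ω := fun v hv => (hC v (hAΩ v hv)).2.2.1 hv
  have hCB : ∀ v, v ∈ B → (↑(C v) : Set (Fin n)) ⊆ commonNbhd G ({v} ∪ ↑Ω) :=
    fun v hv => ((hC v (hBΩ v hv)).2.2.2 hv).1
  -- the extra edge set
  set Eset : Finset (Sym2 (Fin n)) :=
    (Ωᶜ : Finset (Fin n)).biUnion (fun v => (C v).image (fun w => s(v, w))) with hEset
  set EG : SimpleGraph (Fin n) := SimpleGraph.fromEdgeSet ↑Eset with hEG
  have hEGadj : ∀ p q : Fin n, EG.Adj p q ↔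
      ((∃ v, v ∉ Ω ∧ ∃ w ∈ C v, s(p, q) = s(v, w)) ∧ p ≠ q) := by
    intro p q
    rw [hEG, SimpleGraph.fromEdgeSet_adj, Finset.mem_coe, hEset, Finset.mem_biUnion]
    constructor
    · rintro ⟨⟨v, hv, hmem⟩, hne⟩
      rw [Finset.mem_image] at hmem
      obtain ⟨w, hw, heq⟩ := hmem
      exact ⟨⟨v, Finset.mem_compl.mp hv, w, hw, heq.symm⟩, hne⟩
    · rintro ⟨⟨v, hv, w, hw, heq⟩, hne⟩
      exact ⟨⟨v, Finset.mem_compl.mpr hv, Finset.mem_image.mpr ⟨w, hw, heq.symm⟩⟩, hne⟩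
  have hEGadj2 : ∀ p q : Fin n, EG.Adj p q →
      (p ∉ Ω ∧ q ∈ C p) ∨ (q ∉ Ω ∧ p ∈ C q) := by
    intro p q hpq
    obtain ⟨⟨v, hv, w, hw, heq⟩, hne⟩ := (hEGadj p q).mp hpq
    rw [Sym2.eq_iff] at heq
    rcases heq with ⟨rfl, rfl⟩ | ⟨rfl, rfl⟩
    · exact Or.inl ⟨hv, hw⟩
    · exact Or.inr ⟨hv, hw⟩
  have hCadj : ∀ v, v ∉ Ω → ∀ w ∈ C v, EG.Adj v w := by
    intro v hv w hw
    exact (hEGadj v w).mpr ⟨⟨v, hv, w, hw, rfl⟩, ((hC v hv).2.1 w hw).ne⟩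
  -- the optimal weakly saturated graph for K_m
  have hwsne : {k | ∃ H, WeaklySaturated (⊤ : SimpleGraph (Fin m)) F H ∧
      H.edgeSet.ncard = k}.Nonempty := by
    obtain ⟨H₀, hle, hnc, l₀, hsp, hadd⟩ :=
      exists_ws F a₀ b₀ hab₀ ((⊤ : SimpleGraph (Fin m)).edgeSet.ncard) ⊤ le_rfl
    exact ⟨H₀.edgeSet.ncard, H₀, ⟨hle, hnc, l₀, hsp, hadd⟩, rfl⟩
  obtain ⟨Hb, hHbws, hHbcard⟩ := Nat.sInf_mem hwsne
  obtain ⟨hHble, hHbnc, lb, hlbsp, hlbadd⟩ := hHbws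
  have hHbcard' : Hb.edgeSet.ncard = wsat (⊤ : SimpleGraph (Fin m)) F := hHbcard
  -- the embedding of Fin m onto Ω
  set ι : Fin m ↪ Fin n := (Ω.orderEmbOfFin hΩcard).toEmbedding with hι
  have hιΩ : ∀ x : Fin m, ι x ∈ Ω := fun x => Finset.orderEmbOfFin_mem Ω hΩcard x
  have hιsurj : ∀ w ∈ Ω, ∃ x, ι x = w := by
    intro w hw
    have := Finset.range_orderEmbOfFin Ω hΩcard
    rw [Set.ext_iff] at this
    exact (this w).mpr hw
  -- the weakly saturated graph H
  set H : SimpleGraph (Fin n) := Hb.map ι ⊔ EG with hH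
  have hmapΩ : ∀ (K : SimpleGraph (Fin m)) (p q : Fin n), (K.map ι).Adj p q → p ∈ Ω ∧ q ∈ Ω := by
    rintro K p q ⟨-, u, w, _, rfl, rfl⟩
    exact ⟨hιΩ u, hιΩ w⟩
  have hEGleG : EG ≤ G := by
    intro p q hpq
    rcases hEGadj2 p q hpq with ⟨hp, hq⟩ | ⟨hq, hp⟩
    · exact (hC p hp).2.1 q hq
    · exact ((hC q hq).2.1 p hp).symm
  have hmapleG : ∀ K : SimpleGraph (Fin m), K.map ι ≤ G := by
    rintro K p q ⟨-, u, w, huw, rfl, rfl⟩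
    exact hΩclique (hιΩ u) (hιΩ w) (fun h => (K.ne_of_adj huw) (ι.injective h))
  have hHleG : H ≤ G := sup_le (hmapleG Hb) hEGleG
  set H₁ : SimpleGraph (Fin n) := (⊤ : SimpleGraph (Fin m)).map ι ⊔ EG with hH₁
  have hH₁leG : H₁ ≤ G := sup_le (hmapleG ⊤) hEGleG
  -- H contains no copy of F
  have hnocopy : ¬ HasCopy F H := by
    rintro ⟨f, hf⟩
    -- classify H-neighbors
    have hnbr : ∀ p q, H.Adj p q →
        (p ∈ Ω ∧ q ∈ Ω) ∨ (p ∉ Ω ∧ q ∈ C p) ∨ (q ∉ Ω ∧ p ∈ C q) := by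
      intro p q hpq
      rcases hpq with hmap | hEGa
      · exact Or.inl (hmapΩ Hb p q hmap)
      · rcases hEGadj2 p q hEGa with h | h
        · exact Or.inr (Or.inl h)
        · exact Or.inr (Or.inr h)
    -- a vertex image outside Ω leads to a contradiction via degrees
    have hkey : ∀ c : Fin s, f c ∉ Ω → (∀ d, F.Adj c d → f d ∈ C (f c)) → False := by
      intro c hcΩ hCd
      have himg : (F.neighborFinset c).image f ⊆ C (f c) := by
        intro w hw
        rw [Finset.mem_image] at hw
        obtain ⟨d, hd, rfl⟩ := hw
        exact hCd d ((F.mem_neighborFinset c d).mp hd)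
      have h1 : (F.neighborFinset c).card = F.degree c := F.card_neighborFinset_eq_degree c
      have h2 : ((F.neighborFinset c).image f).card = (F.neighborFinset c).card :=
        Finset.card_image_of_injective _ f.injective
      have h3 := Finset.card_le_card himg
      have h4 := F.minDegree_le_degree c
      have h5 := (hC (f c) hcΩ).1
      omega
    have hstep1 : ∀ c : Fin s, f c ∉ B := by
      intro c hcB
      refine hkey c (hBΩ _ hcB) ?_
      intro d hcd
      rcases hnbr (f c) (f d) (hf c d hcd) with ⟨h1, _⟩ | ⟨_, h2⟩ | ⟨hq, h2⟩
      · exact absurd h1 (hBΩ _ hcB)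
      · exact h2
      · -- f c ∈ C (f d) with f d ∉ Ω
        exfalso
        rcases htri (f d) with h | h | h
        · exact hq h
        · exact hBΩ _ hcB (hCA _ h h2)
        · exact hBA _ hcB (hWsub (f d) (f c) (hCB _ h h2)).1
    have hstep2 : ∀ c : Fin s, f c ∉ A := by
      intro c hcA
      refine hkey c (hAΩ _ hcA) ?_
      intro d hcd
      rcases hnbr (f c) (f d) (hf c d hcd) with ⟨h1, _⟩ | ⟨_, h2⟩ | ⟨hq, h2⟩
      · exact absurd h1 (hAΩ _ hcA)
      · exact h2
      · exfalso
        rcases htri (f d) with h | h | h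
        · exact hq h
        · exact hAΩ _ hcA (hCA _ h h2)
        · exact hstep1 d h
    have hstep3 : ∀ c : Fin s, f c ∈ Ω := by
      intro c
      rcases htri (f c) with h | h | h
      · exact h
      · exact absurd h (hstep2 c)
      · exact absurd h (hstep1 c)
    choose g hg using fun c => hιsurj (f c) (hstep3 c)
    have hginj : Function.Injective g := by
      intro c d hcd
      apply f.injective
      rw [← hg c, ← hg d, hcd]
    apply hHbnc
    refine ⟨⟨g, hginj⟩, ?_⟩
    intro c d hcd
    simp only [Function.Embedding.coeFn_mk]
    rcases hf c d hcd with hmap | hEGa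
    · obtain ⟨-, u, w, huw, hu, hw⟩ := hmap
      have hu' : u = g c := ι.injective (by rw [hu, hg])
      have hw' : w = g d := ι.injective (by rw [hw, hg])
      rwa [hu', hw'] at huw
    · exfalso
      rcases hEGadj2 _ _ hEGa with ⟨h1, _⟩ | ⟨h1, _⟩
      · exact h1 (hstep3 c)
      · exact h1 (hstep3 d)
  -- the edge count of H
  have hCnotC : ∀ v₁ v₂ : Fin n, v₁ ∉ Ω → v₂ ∉ Ω → v₂ ∈ C v₁ → v₁ ∈ C v₂ → False := by
    intro v₁ v₂ h1 h2 h21 h12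
    rcases htri v₁ with h | h | h
    · exact h1 h
    · exact h2 (hCA v₁ h h21)
    · rcases htri v₂ with h' | h' | h'
      · exact h2 h'
      · exact h1 (hCA v₂ h' h12)
      · exact hBA v₂ h' (hWsub v₁ v₂ (hCB v₁ h h21)).1
  have hEcard : (EG.edgeSet).ncard = (δ - 1) * (n - m) := by
    have hnd : ∀ e ∈ (↑Eset : Set (Sym2 (Fin n))), ¬ e.IsDiag := by
      intro e he
      rw [Finset.mem_coe, hEset, Finset.mem_biUnion] at he
      obtain ⟨v, hv, hmem⟩ := he
      rw [Finset.mem_image] at hmem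
      obtain ⟨w, hw, rfl⟩ := hmem
      rw [Sym2.mk_isDiag_iff]
      exact ((hC v (Finset.mem_compl.mp hv)).2.1 w hw).ne
    have h1 : EG.edgeSet = ↑Eset := by
      rw [hEG, SimpleGraph.edgeSet_fromEdgeSet]
      ext e
      simp only [Set.mem_diff, Set.mem_setOf_eq]
      exact ⟨fun h => h.1, fun h => ⟨h, hnd e h⟩⟩
    rw [h1, Set.ncard_coe_finset, hEset]
    rw [Finset.card_biUnion]
    · have hsame : ∀ v ∈ (Ωᶜ : Finset (Fin n)), ((C v).image (fun w => s(v, w))).card = δ - 1 := by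
        intro v hv
        rw [Finset.card_image_of_injOn, (hC v (Finset.mem_compl.mp hv)).1]
        intro w₁ hw₁ w₂ hw₂ heq
        rw [Sym2.eq_iff] at heq
        rcases heq with ⟨-, h⟩ | ⟨h1', h2'⟩
        · exact h
        · exact absurd (h1' ▸ hw₂) (hCne_self v (Finset.mem_compl.mp hv))
      rw [Finset.sum_congr rfl hsame, Finset.sum_const, smul_eq_mul, Finset.card_compl,
        Fintype.card_fin, hΩcard, Nat.mul_comm]
    · intro v₁ h₁ v₂ h₂ hne
      rw [Function.onFun, Finset.disjoint_left]
      intro e he₁ he₂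
      rw [Finset.mem_image] at he₁ he₂
      obtain ⟨w₁, hw₁, rfl⟩ := he₁
      obtain ⟨w₂, hw₂, heq⟩ := he₂
      rw [Sym2.eq_iff] at heq
      rcases heq with ⟨h1', -⟩ | ⟨h1', h2'⟩
      · exact hne h1'.symm
      · have e1 : v₂ ∈ C v₁ := by rw [h1']; exact hw₁
        have e2 : v₁ ∈ C v₂ := by rw [← h2']; exact hw₂
        exact hCnotC v₁ v₂ (Finset.mem_compl.mp h₁) (Finset.mem_compl.mp h₂) e1 e2
  have hdisjE : Disjoint (Hb.map ι).edgeSet EG.edgeSet := by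
    rw [Set.disjoint_left]
    intro e hemap heEG
    revert hemap heEG
    refine Sym2.inductionOn e fun p q => fun hemap heEG => ?_
    have h1 := hmapΩ Hb p q ((SimpleGraph.mem_edgeSet _).mp hemap)
    rcases hEGadj2 p q ((SimpleGraph.mem_edgeSet _).mp heEG) with ⟨h2, -⟩ | ⟨h2, -⟩
    · exact h2 h1.1
    · exact h2 h1.2
  have hcount : H.edgeSet.ncard = (δ - 1) * (n - m) + wsat (⊤ : SimpleGraph (Fin m)) F := by
    rw [hH, SimpleGraph.edgeSet_sup, Set.ncard_union_eq hdisjE (Set.toFinite _) (Set.toFinite _),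
      edgeSet_map', Set.ncard_image_of_injective _ (Sym2.map.injective ι.injective),
      hHbcard', hEcard, Nat.add_comm]
  -- the saturation process: phase 1 via transfer, then greedy completion
  have hXnoΩ : ∀ x y : Fin m, ¬ EG.Adj (ι x) (ι y) := by
    intro x y hadj
    rcases hEGadj2 _ _ hadj with ⟨h1, -⟩ | ⟨h1, -⟩
    · exact h1 (hιΩ x)
    · exact h1 (hιΩ y)
  obtain ⟨hsp₁, hadd₁⟩ := transfer F ι EG hXnoΩ lb Hb hlbsp
  have hadd₁' : addEdges H (lb.map fun e => (ι e.1, ι e.2)) = H₁ := by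
    rw [hH, hadd₁, hlbadd, hH₁]
  have hstep : ∀ H', H₁ ≤ H' → H' ≤ G → H' ≠ G →
      ∃ x y, G.Adj x y ∧ NewCopyStep F H' x y := by
    intro H' hH₁H' hH'G hneG
    have hΩcl : ∀ p q : Fin n, p ∈ Ω → q ∈ Ω → p ≠ q → H'.Adj p q := by
      intro p q hp hq hpq
      apply hH₁H'
      obtain ⟨xp, rfl⟩ := hιsurj p hp
      obtain ⟨xq, rfl⟩ := hιsurj q hq
      exact Or.inl ⟨hpq, xp, xq, by simp only [SimpleGraph.top_adj]; exact fun h => hpq (congrArg ι h), rfl, rfl⟩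
    have hCH' : ∀ v, v ∉ Ω → ∀ w ∈ C v, H'.Adj v w :=
      fun v hv w hw => hH₁H' (Or.inr (hCadj v hv w hw))
    by_cases hPa : ∃ v u, v ∈ A ∧ u ∈ Ω ∧ ¬ H'.Adj v u
    · -- case (a): a missing A–Ω edge
      obtain ⟨v, u, hvA, huΩ, hmiss⟩ := hPa
      have hvΩ : v ∉ Ω := hAΩ v hvA
      have hCsp := hC v hvΩ
      have hSadj : ∀ t ∈ C v, H'.Adj v t := hCH' v hvΩ
      have huC : u ∉ C v := fun h => hmiss (hSadj u h)
      have hCsubΩ : C v ⊆ Ω := hCA v hvA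
      have hcardbound : s - 1 - δ ≤ (Ω \ insert u (C v)).card := by
        have h0 := hCsp.1
        have h1 := Finset.card_insert_le u (C v)
        have h2 := Finset.le_card_sdiff (insert u (C v)) Ω
        omega
      obtain ⟨R, hRsub, hRcard⟩ := Finset.exists_subset_card_eq hcardbound
      have hsubΩ : insert u (C v ∪ R) ⊆ Ω := by
        intro t ht
        rcases Finset.mem_insert.mp ht with rfl | ht
        · exact huΩ
        rcases Finset.mem_union.mp ht with ht | ht
        · exact hCsubΩ ht
        · exact (Finset.mem_sdiff.mp (hRsub ht)).1
      refine ⟨v, u, hAdj v hvA u huΩ,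
        step_lemma F H' hs hδ (C v) R hmiss (fun h => hvΩ (h ▸ huΩ)) hCsp.1 hRcard ?_
          (hCne_self v hvΩ) (fun h => hvΩ ((Finset.mem_sdiff.mp (hRsub h)).1))
          huC (fun h => (Finset.mem_sdiff.mp (hRsub h)).2 (Finset.mem_insert_self u _))
          ?_ hSadj⟩
      · exact Finset.disjoint_left.mpr (fun t ht htR =>
          (Finset.mem_sdiff.mp (hRsub htR)).2 (Finset.mem_insert_of_mem ht))
      · intro p hp q hq hpq
        exact hΩcl p q (hsubΩ hp) (hsubΩ hq) hpq
    have hAcom : ∀ p ∈ A, ∀ u ∈ Ω, H'.Adj p u := by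
      push_neg at hPa
      exact fun p hp u hu => hPa p u hp hu
    by_cases hPb : ∃ v w, v ∈ A ∧ w ∈ A ∧ G.Adj v w ∧ ¬ H'.Adj v w
    · -- case (b): a missing A–A edge
      obtain ⟨v, w, hvA, hwA, hGvw, hmiss⟩ := hPb
      obtain ⟨S, hSsub, hScard⟩ := Finset.exists_subset_card_eq
        (show δ - 1 ≤ Ω.card by omega)
      obtain ⟨R, hRsub, hRcard⟩ := Finset.exists_subset_card_eq
        (show s - 1 - δ ≤ (Ω \ S).card by
          have h2 := Finset.le_card_sdiff S Ω
          omega)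
      have hmemc : ∀ t, t ∈ insert w (S ∪ R) → t = w ∨ t ∈ Ω := by
        intro t ht
        rcases Finset.mem_insert.mp ht with rfl | ht
        · exact Or.inl rfl
        rcases Finset.mem_union.mp ht with ht | ht
        · exact Or.inr (hSsub ht)
        · exact Or.inr (Finset.mem_sdiff.mp (hRsub ht)).1
      refine ⟨v, w, hGvw,
        step_lemma F H' hs hδ S R hmiss hGvw.ne hScard hRcard ?_
          (fun h => hAΩ v hvA (hSsub h))
          (fun h => hAΩ v hvA (Finset.mem_sdiff.mp (hRsub h)).1)
          (fun h => hAΩ w hwA (hSsub h))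
          (fun h => hAΩ w hwA (Finset.mem_sdiff.mp (hRsub h)).1)
          ?_ (fun t ht => hAcom v hvA t (hSsub ht))⟩
      · exact Finset.disjoint_left.mpr (fun t ht htR =>
          (Finset.mem_sdiff.mp (hRsub htR)).2 ht)
      · intro p hp q hq hpq
        rcases hmemc p hp with rfl | hpΩ
        · rcases hmemc q hq with rfl | hqΩ
          · exact absurd rfl hpq
          · exact hAcom p hwA q hqΩ
        · rcases hmemc q hq with rfl | hqΩ
          · exact (hAcom q hwA p hpΩ).symm
          · exact hΩcl p q hpΩ hqΩ hpq
    have hAAcom : ∀ p q, p ∈ A → q ∈ A → G.Adj p q → H'.Adj p q := by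
      push_neg at hPb
      exact fun p q hp hq hG => hPb p q hp hq hG
    by_cases hPc : ∃ v w, v ∈ B ∧ w ∈ commonNbhd G ({v} ∪ ↑Ω) ∧ ¬ H'.Adj v w
    · -- case (c): a missing B–W edge, use the path power structure
      obtain ⟨v, w0, hvB, hw0W, hmiss0⟩ := hPc
      obtain ⟨hnd, hset, hadjL⟩ := hL v hvB
      have hvΩ : v ∉ Ω := hBΩ v hvB
      have hCsp := hC v hvΩ
      have hCBsp := hCsp.2.2.2 hvB
      have hw0mem : w0 ∈ L v := by
        have : w0 ∈ {x | x ∈ L v} := by rw [hset]; exact hw0W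
        exact this
      obtain ⟨iw, hiwget⟩ := List.mem_iff_get.mp hw0mem
      set Ifin : Finset (Fin (L v).length) :=
        Finset.univ.filter (fun i => ¬ H'.Adj v ((L v).get i)) with hIfin
      have hIne : Ifin.Nonempty := ⟨iw, by
        rw [hIfin, Finset.mem_filter]
        exact ⟨Finset.mem_univ _, by rw [hiwget]; exact hmiss0⟩⟩
      set i₀ := Ifin.min' hIne with hi₀def
      have hi₀I : i₀ ∈ Ifin := Finset.min'_mem _ _
      have hi₀miss : ¬ H'.Adj v ((L v).get i₀) := (Finset.mem_filter.mp hi₀I).2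
      have hminlt : ∀ j : Fin (L v).length, (j : ℕ) < (i₀ : ℕ) → H'.Adj v ((L v).get j) := by
        intro j hj
        by_contra hcon
        have h1 : i₀ ≤ j := Finset.min'_le _ _ (by
          rw [hIfin, Finset.mem_filter]; exact ⟨Finset.mem_univ _, hcon⟩)
        have h2 : (i₀ : ℕ) ≤ (j : ℕ) := h1
        omega
      have hi₀δ : δ - 1 ≤ (i₀ : ℕ) := by
        by_contra hcon
        push_neg at hcon
        exact hi₀miss (hCH' v hvΩ _ (hCBsp.2.1 i₀ i₀.isLt hcon))
      have hwin : ∀ j : Fin (δ - 1), (i₀ : ℕ) - (δ - 1) + (j : ℕ) < (L v).length := by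
        intro j
        have h1 := i₀.isLt
        have h2 := j.isLt
        omega
      set wfun : Fin (δ - 1) → Fin n :=
        fun j => (L v).get ⟨(i₀ : ℕ) - (δ - 1) + j, hwin j⟩ with hwfun
      have hwinj : Function.Injective wfun := by
        intro j₁ j₂ heq
        have h1 := hnd.get_inj_iff.mp heq
        have h2 : (i₀:ℕ) - (δ-1) + (j₁:ℕ) = (i₀:ℕ) - (δ-1) + (j₂:ℕ) := congrArg Fin.val h1
        exact Fin.ext (by omega)
      set S := Finset.univ.image wfun with hSdef
      have hScard : S.card = δ - 1 := by
        rw [hSdef, Finset.card_image_of_injective _ hwinj, Finset.card_univ, Fintype.card_fin]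
      set y := (L v).get i₀ with hy
      have hTchar : ∀ t ∈ insert y S, ∃ k : Fin (L v).length,
          t = (L v).get k ∧ (i₀:ℕ) - (δ-1) ≤ (k:ℕ) ∧ (k:ℕ) ≤ (i₀:ℕ) := by
        intro t ht
        rcases Finset.mem_insert.mp ht with rfl | ht
        · exact ⟨i₀, rfl, by omega, le_rfl⟩
        · rw [hSdef, Finset.mem_image] at ht
          obtain ⟨j, -, rfl⟩ := ht
          have hjlt := j.isLt
          exact ⟨⟨(i₀:ℕ) - (δ-1) + j, hwin j⟩, rfl, by simp, by simp; omega⟩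
      have hmemW : ∀ t ∈ insert y S, t ∈ commonNbhd G ({v} ∪ ↑Ω) := by
        intro t ht
        obtain ⟨k, rfl, -, -⟩ := hTchar t ht
        have : (L v).get k ∈ {x | x ∈ L v} := List.get_mem _ _
        rw [hset] at this
        exact this
      have hmemA : ∀ t ∈ insert y S, t ∈ A := fun t ht => (hWsub v t (hmemW t ht)).1
      have hTadj : ∀ t₁ ∈ insert y S, ∀ t₂ ∈ insert y S, t₁ ≠ t₂ → H'.Adj t₁ t₂ := by
        intro t₁ h₁ t₂ h₂ hne
        obtain ⟨k₁, rfl, hk₁a, hk₁b⟩ := hTchar t₁ h₁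
        obtain ⟨k₂, rfl, hk₂a, hk₂b⟩ := hTchar t₂ h₂
        have hkne : (k₁:ℕ) ≠ (k₂:ℕ) := fun h => hne (congrArg (L v).get (Fin.ext h))
        have hGadj : G.Adj ((L v).get k₁) ((L v).get k₂) := by
          rcases lt_or_gt_of_ne hkne with h | h
          · exact hadjL k₁ k₂ h (by omega)
          · exact (hadjL k₂ k₁ h (by omega)).symm
        exact hAAcom _ _ (hmemA _ h₁) (hmemA _ h₂) hGadj
      have hSadj : ∀ t ∈ S, H'.Adj v t := by
        intro t ht
        rw [hSdef, Finset.mem_image] at ht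
        obtain ⟨j, -, rfl⟩ := ht
        have hjlt := j.isLt
        apply hminlt
        simp
        omega
      have hySmem : y ∉ S := by
        intro hyS'
        rw [hSdef, Finset.mem_image] at hyS'
        obtain ⟨j, -, heq⟩ := hyS'
        have h1 := hnd.get_inj_iff.mp heq
        have h2 := congrArg Fin.val h1
        have hjlt := j.isLt
        simp at h2
        omega
      obtain ⟨R, hRsub, hRcard⟩ := Finset.exists_subset_card_eq
        (show s - 1 - δ ≤ Ω.card by omega)
      have hGvy : G.Adj v y := (hWsub v y (hmemW y (Finset.mem_insert_self _ _))).2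
      refine ⟨v, y, hGvy,
        step_lemma F H' hs hδ S R hi₀miss hGvy.ne hScard hRcard ?_ ?_ ?_ hySmem ?_ ?_ hSadj⟩
      · exact Finset.disjoint_left.mpr (fun t ht htR =>
          hAΩ t (hmemA t (Finset.mem_insert_of_mem ht)) (hRsub htR))
      · exact fun h => hBA v hvB (hmemA v (Finset.mem_insert_of_mem h))
      · exact fun h => hvΩ (hRsub h)
      · exact fun h => hAΩ y (hmemA y (Finset.mem_insert_self _ _)) (hRsub h)
      · intro p hp q hq hpq
        have hsplit : ∀ t, t ∈ insert y (S ∪ R) → t ∈ insert y S ∨ t ∈ Ω := by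
          intro t ht
          rcases Finset.mem_insert.mp ht with rfl | ht
          · exact Or.inl (Finset.mem_insert_self _ _)
          rcases Finset.mem_union.mp ht with ht | ht
          · exact Or.inl (Finset.mem_insert_of_mem ht)
          · exact Or.inr (hRsub ht)
        rcases hsplit p hp with h₁ | h₁
        · rcases hsplit q hq with h₂ | h₂
          · exact hTadj p h₁ q h₂ hpq
          · exact hAcom p (hmemA p h₁) q h₂
        · rcases hsplit q hq with h₂ | h₂
          · exact (hAcom q (hmemA q h₂) p h₁).symm
          · exact hΩcl p q h₁ h₂ hpq
    have hBcom : ∀ v w, v ∈ B → w ∈ commonNbhd G ({v} ∪ ↑Ω) → H'.Adj v w := by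
      push_neg at hPc
      exact fun v w hv hw => hPc v w hv hw
    have hmiss : ∃ p q, G.Adj p q ∧ ¬ H'.Adj p q := by
      by_contra hcon
      push_neg at hcon
      exact hneG (le_antisymm hH'G (fun {a b} hab => hcon a b hab))
    obtain ⟨p, q, hGpq, hmisspq⟩ := hmiss
    have hcased : ∀ v u, v ∈ B → u ∈ Ω → G.Adj v u → ¬ H'.Adj v u →
        ∃ x y, G.Adj x y ∧ NewCopyStep F H' x y := by
      intro v u hvB huΩ hGvu hmissvu
      have hvΩ := hBΩ v hvB
      have hCsp := hC v hvΩ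
      have hCBsp := hCsp.2.2.2 hvB
      have hmemA : ∀ t ∈ C v, t ∈ A := fun t ht => (hWsub v t (hCB v hvB ht)).1
      have hSadj : ∀ t ∈ C v, H'.Adj v t := hCH' v hvΩ
      have huC : u ∉ C v := fun h => hAΩ u (hmemA u h) huΩ
      obtain ⟨R, hRsub, hRcard⟩ := Finset.exists_subset_card_eq
        (show s - 1 - δ ≤ (Ω.erase u).card by
          rw [Finset.card_erase_of_mem huΩ]; omega)
      refine ⟨v, u, hGvu, step_lemma F H' hs hδ (C v) R hmissvu hGvu.ne hCsp.1 hRcard ?_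
        (hCne_self v hvΩ) ?_ huC ?_ ?_ hSadj⟩
      · exact Finset.disjoint_left.mpr (fun t ht htR =>
          hAΩ t (hmemA t ht) (Finset.mem_of_mem_erase (hRsub htR)))
      · exact fun h => hvΩ (Finset.mem_of_mem_erase (hRsub h))
      · exact fun h => (Finset.mem_erase.mp (hRsub h)).1 rfl
      · intro t₁ h₁ t₂ h₂ hne
        have hsplit : ∀ t, t ∈ insert u (C v ∪ R) → t ∈ C v ∨ t ∈ Ω := by
          intro t ht
          rcases Finset.mem_insert.mp ht with rfl | ht
          · exact Or.inr huΩ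
          rcases Finset.mem_union.mp ht with ht | ht
          · exact Or.inl ht
          · exact Or.inr (Finset.mem_of_mem_erase (hRsub ht))
        rcases hsplit t₁ h₁ with k₁ | k₁
        · rcases hsplit t₂ h₂ with k₂ | k₂
          · exact hAAcom _ _ (hmemA _ k₁) (hmemA _ k₂) (hCBsp.2.2 t₁ k₁ t₂ k₂ hne)
          · exact hAcom t₁ (hmemA _ k₁) t₂ k₂
        · rcases hsplit t₂ h₂ with k₂ | k₂
          · exact (hAcom t₂ (hmemA _ k₂) t₁ k₁).symm
          · exact hΩcl t₁ t₂ k₁ k₂ hne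
    rcases htri p with hp | hp | hp
    · rcases htri q with hq | hq | hq
      · exact absurd (hΩcl p q hp hq hGpq.ne) hmisspq
      · exact absurd (hAcom q hq p hp).symm hmisspq
      · exact hcased q p hq hp hGpq.symm (fun h => hmisspq h.symm)
    · rcases htri q with hq | hq | hq
      · exact absurd (hAcom p hp q hq) hmisspq
      · exact absurd (hAAcom p q hp hq hGpq) hmisspq
      · have hpW : p ∈ commonNbhd G ({q} ∪ ↑Ω) := by
          intro u hu
          rcases hu with hu | hu
          · rw [Set.mem_singleton_iff] at hu
            subst hu
            exact hGpq.symm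
          · exact hp u hu
        exact absurd (hBcom q p hq hpW).symm hmisspq
    · rcases htri q with hq | hq | hq
      · exact hcased p q hp hq hGpq hmisspq
      · have hqW : q ∈ commonNbhd G ({p} ∪ ↑Ω) := by
          intro u hu
          rcases hu with hu | hu
          · rw [Set.mem_singleton_iff] at hu
            subst hu
            exact hGpq
          · exact hq u hu
        exact absurd (hBcom p q hp hqW) hmisspq
      · -- case (e): both endpoints outside the closed neighborhood
        obtain ⟨T, hTcard, hTclique, hTsub1, hTsub2⟩ := hpair p q hGpq.ne hp hq
        have hTW : ∀ t ∈ T, t ∈ commonNbhd G ({p} ∪ ↑Ω) ∧ t ∈ commonNbhd G ({q} ∪ ↑Ω) := by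
          intro t ht
          have h1 := hTsub1 (Finset.mem_coe.mpr ht)
          constructor
          · intro u hu
            rcases hu with hu | hu
            · rw [Set.mem_singleton_iff] at hu
              subst hu
              exact h1 u (Or.inl (Or.inl rfl))
            · exact h1 u (Or.inr hu)
          · intro u hu
            rcases hu with hu | hu
            · rw [Set.mem_singleton_iff] at hu
              subst hu
              exact h1 u (Or.inl (Or.inr rfl))
            · exact h1 u (Or.inr hu)
        have hTA : ∀ t ∈ T, t ∈ A := fun t ht => (hWsub p t (hTW t ht).1).1
        have hpT : ∀ t ∈ T, H'.Adj p t := fun t ht => hBcom p t hp (hTW t ht).1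
        have hqT : ∀ t ∈ T, H'.Adj q t := fun t ht => hBcom q t hq (hTW t ht).2
        obtain ⟨S, hSsub, hScard⟩ := Finset.exists_subset_card_eq
          (show δ - 1 ≤ T.card by omega)
        have hRcard : (T \ S).card = s - 1 - δ := by
          rw [Finset.card_sdiff_of_subset hSsub]; omega
        have hunion : S ∪ (T \ S) = T := Finset.union_sdiff_of_subset hSsub
        refine ⟨p, q, hGpq, step_lemma F H' hs hδ S (T \ S) hmisspq hGpq.ne hScard hRcard ?_
          ?_ ?_ ?_ ?_ ?_ (fun t ht => hpT t (hSsub ht))⟩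
        · exact Finset.disjoint_sdiff
        · exact fun h => hBA p hp (hTA p (hSsub h))
        · exact fun h => hBA p hp (hTA p (Finset.mem_sdiff.mp h).1)
        · exact fun h => hBA q hq (hTA q (hSsub h))
        · exact fun h => hBA q hq (hTA q (Finset.mem_sdiff.mp h).1)
        · rw [hunion]
          intro t₁ h₁ t₂ h₂ hne
          rcases Finset.mem_insert.mp h₁ with rfl | h₁'
          · rcases Finset.mem_insert.mp h₂ with rfl | h₂'
            · exact absurd rfl hne
            · exact hqT t₂ h₂'
          · rcases Finset.mem_insert.mp h₂ with rfl | h₂'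
            · exact (hqT t₁ h₁').symm
            · exact hAAcom t₁ t₂ (hTA t₁ h₁') (hTA t₂ h₂') (hTclique h₁' h₂' hne)
  obtain ⟨l₂, hsp₂, hadd₂⟩ :=
    greedy F G ((G.edgeSet \ H₁.edgeSet).ncard) H₁ le_rfl hH₁leG hstep
  have hws : WeaklySaturated G F H := by
    refine ⟨hHleG, hnocopy, (lb.map fun e => (ι e.1, ι e.2)) ++ l₂, ?_, ?_⟩
    · rw [satProcess_append]
      exact ⟨hsp₁, by rw [hadd₁']; exact hsp₂⟩
    · rw [addEdges_append, hadd₁']; exact hadd₂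
  have hfin : wsat G F ≤ H.edgeSet.ncard := Nat.sInf_le ⟨H, hws, rfl⟩
  rw [hcount] at hfin
  exact hfin
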